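/- arXiv:math/0509727 — 5 statements merged into one kernel-verified Lean document; each statement's English description precedes it below -/
import Mathlib

section
/- Let p(y) = p₀(y−c₀)⋯(y−cₙ) be a complex polynomial of degree n+1 in one variable with p₀ ≠ 0, and let q(y) be a polynomial of degree at most n. Let δ > 0 satisfy: (i) |cᵢ − cⱼ| > 2δ for all i ≠ j, and (ii) max over |y| ≤ maxᵢ|cᵢ| + δ of |q(y)| is strictly less than |p₀|δ^{n+1}. Then the polynomial P(y) = p(y) + q(y) has a root in the open δ-neighborhood of each root cᵢ of p. -/
/-!
If `P` splits, then `P(z) = lc(P) · ∏ (z - a)` over its roots `a`; were every root at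
distance `≥ δ` from `z`, this would give `‖P(z)‖ ≥ ‖lc(P)‖ δ^deg P`. For `P = p + q` and
`z = cᵢ` we have `P(cᵢ) = q(cᵢ)`, while `lc(P) = p₀` and `deg P = n + 1` because `deg q ≤ n`;
so the smallness of `q` on the disc containing `cᵢ` forces a root of `P` within `δ` of `cᵢ`.
-/

open Polynomial

theorem Polynomial.Splits.exists_isRoot_norm_sub_lt_of_norm_eval_lt {K : Type*} [NormedField K]
    {P : K[X]} (hP : P.Splits) (z : K) {δ : ℝ} (hδ : 0 ≤ δ)
    (h : ‖P.eval z‖ < ‖P.leadingCoeff‖ * δ ^ P.natDegree) :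
    ∃ y, ‖y - z‖ < δ ∧ P.IsRoot y := by
  by_contra! hfar
  have hroots : ∀ a ∈ P.roots, δ ≤ ‖z - a‖ := fun a ha =>
    le_of_not_gt fun hlt => hfar a (by rwa [norm_sub_rev]) (isRoot_of_mem_roots ha)
  refine h.not_ge ?_
  calc ‖P.leadingCoeff‖ * δ ^ P.natDegree
      = ‖P.leadingCoeff‖ * (P.roots.map fun _ => δ).prod := by
        rw [Multiset.map_const', Multiset.prod_replicate, hP.natDegree_eq_card_roots]
    _ ≤ ‖P.leadingCoeff‖ * (P.roots.map fun a => ‖z - a‖).prod := by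
        gcongr
        exact Multiset.prod_map_le_prod_map₀ _ _ (fun _ _ => hδ) hroots
    _ = ‖P.eval z‖ := by
        rw [hP.eval_eq_prod_roots, norm_mul]
        exact congrArg _ (P.roots.prod_hom' (normHom : K →*₀ ℝ) (z - ·))

section PerturbedProduct

variable {K ι : Type*} [Field K] [Fintype ι] {a : K} (c : ι → K) {q : K[X]}

theorem degree_C_mul_prod_X_sub_C (ha : a ≠ 0) :
    (C a * ∏ j, (X - C (c j))).degree = Fintype.card ι := by
  rw [degree_C_mul ha, degree_prod]
  simp [degree_X_sub_C]

theorem natDegree_C_mul_prod_X_sub_C_add (ha : a ≠ 0) (hq : q.degree < Fintype.card ι) :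
    (C a * ∏ j, (X - C (c j)) + q).natDegree = Fintype.card ι := by
  rw [natDegree_add_eq_left_of_degree_lt (by rwa [degree_C_mul_prod_X_sub_C c ha])]
  exact natDegree_eq_of_degree_eq_some (degree_C_mul_prod_X_sub_C c ha)

theorem leadingCoeff_C_mul_prod_X_sub_C_add (ha : a ≠ 0) (hq : q.degree < Fintype.card ι) :
    (C a * ∏ j, (X - C (c j)) + q).leadingCoeff = a := by
  rw [leadingCoeff_add_of_degree_lt' (by rwa [degree_C_mul_prod_X_sub_C c ha]),
    leadingCoeff_mul, leadingCoeff_C,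
    (monic_prod_of_monic _ _ fun j _ => monic_X_sub_C (c j)).leadingCoeff, mul_one]

theorem eval_C_mul_prod_X_sub_C_add (i : ι) :
    (C a * ∏ j, (X - C (c j)) + q).eval (c i) = q.eval (c i) := by
  simp [eval_prod, Finset.prod_eq_zero (Finset.mem_univ i)]

end PerturbedProduct

theorem stmt1_general (n : ℕ) (p₀ : ℂ) (hp₀ : p₀ ≠ 0) (c : Fin (n + 1) → ℂ)
    (q : Polynomial ℂ) (hq : q.degree ≤ n) (δ : ℝ) (hδ : 0 < δ)
    (hsmall : ∀ y : ℂ,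
      ‖y‖ ≤ (Finset.univ.sup' Finset.univ_nonempty fun i => ‖c i‖) + δ →
      ‖q.eval y‖ < ‖p₀‖ * δ ^ (n + 1)) :
    ∀ i, ∃ y : ℂ, ‖y - c i‖ < δ ∧
      (C p₀ * ∏ j, (X - C (c j)) + q).eval y = 0 := by
  intro i
  have hq' : q.degree < Fintype.card (Fin (n + 1)) := by
    rw [Fintype.card_fin]
    exact hq.trans_lt (WithBot.coe_lt_coe.2 n.lt_succ_self)
  have hci : ‖c i‖ ≤ (Finset.univ.sup' Finset.univ_nonempty fun i => ‖c i‖) + δ :=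
    (Finset.le_sup' (fun i => ‖c i‖) (Finset.mem_univ i)).trans (le_add_of_nonneg_right hδ.le)
  refine (IsAlgClosed.splits _).exists_isRoot_norm_sub_lt_of_norm_eval_lt (c i) hδ.le ?_
  rw [eval_C_mul_prod_X_sub_C_add, leadingCoeff_C_mul_prod_X_sub_C_add c hp₀ hq',
    natDegree_C_mul_prod_X_sub_C_add c hp₀ hq', Fintype.card_fin]
  exact hsmall (c i) hci

/-- If `p(y) = p₀ (y - c₀)⋯(y - cₙ)` with roots pairwise at distance `> 2δ`, and
`q` has degree `≤ n` with `|q| < |p₀| δ^(n+1)` on the disc `|y| ≤ maxᵢ |cᵢ| + δ`,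
then `p + q` has a root in the open `δ`-disc around each `cᵢ`. -/
theorem stmt1 (n : ℕ) (p₀ : ℂ) (hp₀ : p₀ ≠ 0) (c : Fin (n + 1) → ℂ)
    (q : Polynomial ℂ) (hq : q.degree ≤ n) (δ : ℝ) (hδ : 0 < δ)
    (hsep : ∀ i j, i ≠ j → ‖c i - c j‖ > 2 * δ)
    (hsmall : ∀ y : ℂ,
      ‖y‖ ≤ (Finset.univ.sup' Finset.univ_nonempty fun i => ‖c i‖) + δ →
      ‖q.eval y‖ < ‖p₀‖ * δ ^ (n + 1)) :
    ∀ i, ∃ y : ℂ, ‖y - c i‖ < δ ∧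
      (C p₀ * ∏ j, (X - C (c j)) + q).eval y = 0 :=
  stmt1_general n p₀ hp₀ c q hq δ hδ hsmall
end

section
/- For any complex polynomial G(x,y) in two variables of degree at most n, the norm ‖G‖_max (the sum over homogeneous parts of the maximum of their moduli on the unit sphere {|x|²+|y|²=1}) satisfies ‖G‖_max ≤ 2n · max_{|x| ≤ 1, |y| ≤ 1} |G(x,y)|, provided n ≥ 1. -/
open MvPolynomial

/-- Maximum of `|p|` on the unit sphere of ℂ². -/
noncomputable def sphereMax (p : MvPolynomial (Fin 2) ℂ) : ℝ :=
  sSup {r : ℝ | ∃ x y : ℂ, ‖x‖ ^ 2 + ‖y‖ ^ 2 = 1 ∧ r = ‖MvPolynomial.eval ![x, y] p‖}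

/-- The max-norm of a polynomial: the sum over its homogeneous parts of the
maxima of their moduli on the unit sphere. -/
noncomputable def maxNorm (p : MvPolynomial (Fin 2) ℂ) : ℝ :=
  ∑ k ∈ Finset.range (p.totalDegree + 1), sphereMax (homogeneousComponent k p)

/-- Maximum of `|p|` on the closed unit bidisc. -/
noncomputable def bidiscMax (p : MvPolynomial (Fin 2) ℂ) : ℝ :=
  sSup {r : ℝ | ∃ x y : ℂ, ‖x‖ ≤ 1 ∧ ‖y‖ ≤ 1 ∧ r = ‖MvPolynomial.eval ![x, y] p‖}

/-!
Each homogeneous component `G_k` of `G` is bounded on the bidisc by the maximum of `G` there.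
Indeed, for a primitive `m`-th root of unity `ζ` with `m > deg G`, the roots-of-unity filter gives
`m · G_k(v) = ∑_{j < m} ζ^{-jk} G(ζ^j v)`, and the bidisc is invariant under `v ↦ ζ^j v`.
Since the unit sphere lies in the bidisc, `‖G‖_max` is at most `(deg G + 1) · max_{bidisc} |G|`,
and `deg G + 1 ≤ 2n` when `1 ≤ n`.
-/

open Finset

namespace MvPolynomial

variable {σ R : Type*}

theorem IsHomogeneous.eval_smul [CommSemiring R] {φ : MvPolynomial σ R} {k : ℕ}
    (hφ : φ.IsHomogeneous k) (t : R) (v : σ → R) :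
    eval (t • v) φ = t ^ k * eval v φ := by
  rw [eval_eq, eval_eq, mul_sum]
  refine sum_congr rfl fun d hd => ?_
  simp only [Pi.smul_apply, smul_eq_mul, mul_pow, prod_mul_distrib, prod_pow_eq_pow_sum,
    ← hφ.degree_eq_sum_deg_support hd]
  ring

theorem sum_range_homogeneousComponent [CommSemiring R] {φ : MvPolynomial σ R} {N : ℕ}
    (hN : φ.totalDegree < N) :
    ∑ l ∈ range N, homogeneousComponent l φ = φ := by
  conv_rhs => rw [← sum_homogeneousComponent φ]
  refine (sum_subset (range_subset_range.mpr hN) fun l _ hl => ?_).symm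
  exact homogeneousComponent_eq_zero _ _ (by simpa using hl)

theorem eval_smul_eq_sum_homogeneousComponent [CommSemiring R] {φ : MvPolynomial σ R} {N : ℕ}
    (hN : φ.totalDegree < N) (t : R) (v : σ → R) :
    eval (t • v) φ = ∑ l ∈ range N, t ^ l * eval v (homogeneousComponent l φ) := by
  conv_lhs => rw [← sum_range_homogeneousComponent hN]
  simp only [map_sum, (homogeneousComponent_isHomogeneous _ φ).eval_smul]

end MvPolynomial

namespace IsPrimitiveRoot

variable {R : Type*} [CommRing R] [IsDomain R] {ζ : R} {m : ℕ}

theorem sum_pow_sub_mul_pow (hζ : IsPrimitiveRoot ζ m) {k l : ℕ} (hk : k < m) (hl : l < m) :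
    ∑ j ∈ range m, (ζ ^ j) ^ (m - k) * (ζ ^ j) ^ l = if l = k then (m : R) else 0 := by
  have hpow : ∀ j, (ζ ^ j) ^ (m - k) * (ζ ^ j) ^ l = (ζ ^ (m - k + l)) ^ j := fun j => by
    rw [← pow_add, ← pow_mul, ← pow_mul, mul_comm]
  simp only [hpow]
  split_ifs with hlk
  · simp [hlk, Nat.sub_add_cancel hk.le, hζ.pow_eq_one]
  · have hw : ζ ^ (m - k + l) ≠ 1 := by
      rw [Ne, hζ.pow_eq_one_iff_dvd]
      rintro ⟨c, hc⟩
      have hlt : m - k + l < m * 2 := by omega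
      rcases c with _ | _ | c <;> [omega; omega; nlinarith]
    have hwm : (ζ ^ (m - k + l)) ^ m = 1 := by
      rw [← pow_mul, mul_comm, pow_mul, hζ.pow_eq_one, one_pow]
    have hgeom := mul_geom_sum (ζ ^ (m - k + l)) m
    rw [hwm, sub_self] at hgeom
    exact (mul_eq_zero.mp hgeom).resolve_left (sub_ne_zero.mpr hw)

-- `(ζ ^ j) ^ (m - k)` stands for `ζ ^ (-j k)`.
theorem mul_eval_homogeneousComponent {σ : Type*} (hζ : IsPrimitiveRoot ζ m)
    {G : MvPolynomial σ R} (hG : G.totalDegree < m) {k : ℕ} (hk : k < m) (v : σ → R) :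
    m * eval v (homogeneousComponent k G) =
      ∑ j ∈ range m, (ζ ^ j) ^ (m - k) * eval (ζ ^ j • v) G := by
  simp only [eval_smul_eq_sum_homogeneousComponent hG, mul_sum, ← mul_assoc]
  rw [sum_comm, sum_congr rfl fun l hl => by
    rw [← sum_mul, hζ.sum_pow_sub_mul_pow hk (mem_range.mp hl)]]
  simp only [ite_mul, zero_mul, sum_ite_eq', mem_range, if_pos hk]

end IsPrimitiveRoot

namespace MvPolynomial

theorem norm_eval_le_sum_norm_coeff {σ R : Type*} [NormedCommRing R] [NormOneClass R]
    (p : MvPolynomial σ R) {v : σ → R} (hv : ∀ i, ‖v i‖ ≤ 1) :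
    ‖eval v p‖ ≤ ∑ d ∈ p.support, ‖coeff d p‖ := by
  rw [eval_eq]
  refine (norm_sum_le _ _).trans (sum_le_sum fun d _ => ?_)
  refine (norm_mul_le _ _).trans (mul_le_of_le_one_right (norm_nonneg _) ?_)
  refine (Finset.norm_prod_le _ _).trans (prod_le_one (fun _ _ => norm_nonneg _) fun i _ => ?_)
  exact (norm_pow_le _ _).trans (pow_le_one₀ (norm_nonneg _) (hv i))

theorem norm_eval_homogeneousComponent_le {σ : Type*} (G : MvPolynomial σ ℂ) (k : ℕ)
    (v : σ → ℂ) {B : ℝ} (hB : ∀ t : ℂ, ‖t‖ = 1 → ‖eval (t • v) G‖ ≤ B) :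
    ‖eval v (homogeneousComponent k G)‖ ≤ B := by
  set m := max G.totalDegree k + 1
  have hm : m ≠ 0 := by omega
  have hζ := Complex.isPrimitiveRoot_exp m hm
  set ζ := Complex.exp (2 * Real.pi * Complex.I / m)
  have hζj : ∀ j : ℕ, ‖ζ ^ j‖ = 1 := fun j => by rw [norm_pow, hζ.norm'_eq_one hm, one_pow]
  have hfilter := hζ.mul_eval_homogeneousComponent (G := G) (by omega) (k := k) (by omega) v
  refine le_of_mul_le_mul_left (a := (m : ℝ)) ?_ (by positivity)
  calc (m : ℝ) * ‖eval v (homogeneousComponent k G)‖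
      = ‖∑ j ∈ range m, (ζ ^ j) ^ (m - k) * eval (ζ ^ j • v) G‖ := by
        rw [← hfilter, norm_mul, Complex.norm_natCast]
    _ ≤ ∑ j ∈ range m, ‖(ζ ^ j) ^ (m - k) * eval (ζ ^ j • v) G‖ := norm_sum_le _ _
    _ ≤ ∑ _j ∈ range m, B := sum_le_sum fun j _ => by
        rw [norm_mul, norm_pow, hζj, one_pow, one_mul]
        exact hB _ (hζj j)
    _ = m * B := by rw [sum_const, card_range, nsmul_eq_mul]

end MvPolynomial

theorem norm_eval_le_bidiscMax (p : MvPolynomial (Fin 2) ℂ) {x y : ℂ} (hx : ‖x‖ ≤ 1)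
    (hy : ‖y‖ ≤ 1) : ‖eval ![x, y] p‖ ≤ bidiscMax p := by
  refine le_csSup ⟨∑ d ∈ p.support, ‖coeff d p‖, ?_⟩ ⟨x, y, hx, hy, rfl⟩
  rintro _ ⟨x', y', hx', hy', rfl⟩
  exact norm_eval_le_sum_norm_coeff p fun i => by fin_cases i <;> simpa

theorem bidiscMax_nonneg (p : MvPolynomial (Fin 2) ℂ) : 0 ≤ bidiscMax p :=
  (norm_nonneg _).trans (norm_eval_le_bidiscMax p (x := 0) (y := 0) (by simp) (by simp))

theorem sphereMax_homogeneousComponent_le_bidiscMax (G : MvPolynomial (Fin 2) ℂ) (k : ℕ) :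
    sphereMax (homogeneousComponent k G) ≤ bidiscMax G := by
  refine Real.sSup_le ?_ (bidiscMax_nonneg G)
  rintro _ ⟨x, y, hxy, rfl⟩
  refine norm_eval_homogeneousComponent_le G k _ fun t ht => ?_
  have hx : ‖x‖ ≤ 1 := by nlinarith [norm_nonneg x, sq_nonneg ‖y‖]
  have hy : ‖y‖ ≤ 1 := by nlinarith [norm_nonneg y, sq_nonneg ‖x‖]
  rw [Matrix.smul_cons, Matrix.smul_cons, Matrix.smul_empty]
  exact norm_eval_le_bidiscMax G (by simpa [ht]) (by simpa [ht])

/-- For `G` of degree at most `n` (with `n ≥ 1`),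
`‖G‖_max ≤ 2n · max_{|x|,|y| ≤ 1} |G(x,y)|`. -/
theorem stmt4 (n : ℕ) (hn : 1 ≤ n) (G : MvPolynomial (Fin 2) ℂ)
    (hG : G.totalDegree ≤ n) :
    maxNorm G ≤ 2 * n * bidiscMax G := by
  have hdeg : (G.totalDegree + 1 : ℝ) ≤ 2 * n := by
    have : (G.totalDegree : ℝ) ≤ n := by exact_mod_cast hG
    have : (1 : ℝ) ≤ n := by exact_mod_cast hn
    linarith
  calc maxNorm G ≤ ∑ _k ∈ range (G.totalDegree + 1), bidiscMax G :=
        sum_le_sum fun k _ => sphereMax_homogeneousComponent_le_bidiscMax G k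
    _ = (G.totalDegree + 1 : ℝ) * bidiscMax G := by
        rw [sum_const, card_range, nsmul_eq_mul, Nat.cast_succ]
    _ ≤ 2 * n * bidiscMax G := mul_le_mul_of_nonneg_right hdeg (bidiscMax_nonneg G)
end

section
/- Let g(x,y) = g₀ ∏_{i=1}^{k} ((x,y), u_i) be a homogeneous polynomial of degree k ≥ 1 in two complex variables, where each u_i ∈ ℂ² is a unit vector and ((x,y), u_i) denotes the Hermitian pairing (linear in (x,y)). Then ‖g‖_max ≤ |g₀| ≤ ‖g‖_max · (2√k)^k, where ‖g‖_max = max_{|x|²+|y|²=1} |g(x,y)|. -/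
open MvPolynomial

/-- Hermitian norm on ℂ². -/
noncomputable def hnorm (v : ℂ × ℂ) : ℝ := Real.sqrt (‖v.1‖ ^ 2 + ‖v.2‖ ^ 2)

/-! The upper bound is Cauchy–Schwarz applied to each factor. For the lower bound, the points
`((1 + ζ) / 2, (1 - ζ) / 2)` with `|ζ| = 1` form a circle on the unit sphere along which each factor
becomes `p ζ + q` with `|p|² + |q|² = 1/2`. Such a factor is bounded below in terms of the distance
from `ζ` to a fixed point `w` of the unit circle, and the maximum modulus principle applied to
`∏ (1 - w̄ᵢ z)`, which is `1` at the origin, gives a `ζ` with `∏ |ζ - wᵢ| ≥ 1`. -/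

section

open Complex Metric ComplexConjugate

lemma exists_norm_eq_one_one_le_prod_norm_sub {ι : Type*} (s : Finset ι) (w : ι → ℂ) :
    ∃ ζ : ℂ, ‖ζ‖ = 1 ∧ 1 ≤ ∏ i ∈ s, ‖ζ - w i‖ := by
  set f : ℂ → ℂ := fun z ↦ ∏ i ∈ s, (1 - conj (w i) * z)
  have hf : DiffContOnCl ℂ f (ball 0 1) := by
    refine Differentiable.diffContOnCl ?_
    fun_prop
  obtain ⟨ζ, hζ, hmax⟩ := Complex.exists_mem_frontier_isMaxOn_norm isBounded_ball
    ⟨0, mem_ball_self one_pos⟩ hf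
  rw [frontier_ball 0 one_ne_zero, mem_sphere_zero_iff_norm] at hζ
  refine ⟨ζ, hζ, ?_⟩
  have h0 : (0 : ℂ) ∈ closure (ball 0 1) := subset_closure (mem_ball_self one_pos)
  have hfactor : ∀ i, ‖1 - conj (w i) * ζ‖ = ‖ζ - w i‖ := by
    intro i
    have : 1 - conj (w i) * ζ = ζ * conj (ζ - w i) := by
      rw [map_sub, mul_sub, mul_conj', hζ]
      push_cast; ring
    rw [this, norm_mul, hζ, one_mul, RCLike.norm_conj]
  simpa [f, norm_prod, hfactor] using hmax h0

lemma exists_norm_eq_one_forall_mul_min_le_sq_norm (p q : ℂ) :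
    ∃ w : ℂ, ‖w‖ = 1 ∧ ∀ ζ : ℂ, ‖ζ‖ = 1 →
      (‖p‖ ^ 2 + ‖q‖ ^ 2) * min 1 (‖ζ - w‖ ^ 2 / 2) ≤ ‖p * ζ + q‖ ^ 2 := by
  set s := ‖p‖ ^ 2 + ‖q‖ ^ 2
  set c := p * conj q
  have hexpand : ∀ ζ : ℂ, ‖ζ‖ = 1 → ‖p * ζ + q‖ ^ 2 = s + 2 * (ζ * c).re := by
    intro ζ hζ
    rw [Complex.sq_norm, normSq_add, normSq_mul, normSq_eq_norm_sq ζ, hζ, normSq_eq_norm_sq p,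
      normSq_eq_norm_sq q, show p * ζ * conj q = ζ * c by ring]
    ring
  by_cases hc : c = 0
  · refine ⟨1, norm_one, fun ζ hζ ↦ ?_⟩
    rw [hexpand ζ hζ, hc, mul_zero, zero_re, mul_zero, add_zero]
    exact mul_le_of_le_one_right (by positivity) (min_le_left _ _)
  set m := ‖c‖
  have hm : 0 < m := norm_pos_iff.mpr hc
  have hms : 2 * m ≤ s := by
    have : m = ‖p‖ * ‖q‖ := by simp [m, c]
    nlinarith [sq_nonneg (‖p‖ - ‖q‖)]
  -- `‖p * ζ + q‖` is smallest on the unit circle at `ζ = -conj c / m`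
  refine ⟨-conj c / m, by simp [m, hm.ne'], fun ζ hζ ↦ ?_⟩
  set R := (ζ * c).re
  have hR : |R| ≤ m := by
    simpa only [norm_mul, hζ, one_mul] using abs_re_le_norm (ζ * c)
  have hdist : ‖ζ - -conj c / m‖ ^ 2 = 2 + 2 * (R / m) := by
    rw [Complex.sq_norm, normSq_sub, normSq_eq_norm_sq ζ, hζ, normSq_eq_norm_sq, norm_div, norm_neg,
      RCLike.norm_conj, Complex.norm_real, Real.norm_of_nonneg hm.le, div_self hm.ne', map_div₀,
      map_neg, conj_conj, conj_ofReal, show ζ * (-c / m) = -(ζ * c) / m by ring, div_ofReal_re,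
      neg_re]
    ring
  rw [hexpand ζ hζ, hdist]
  rcases le_or_gt 0 R with hR0 | hR0
  · nlinarith [min_le_left 1 ((2 + 2 * (R / m)) / 2), (show 0 ≤ s by positivity)]
  · have : s * (R / m) ≤ 2 * R := by
      rw [mul_div_assoc', div_le_iff₀ hm]
      nlinarith
    nlinarith [min_le_right 1 ((2 + 2 * (R / m)) / 2), (show 0 ≤ s by positivity)]

lemma one_le_two_mul_pow_mul_prod_min {k : ℕ} (hk : 1 ≤ k) (d : Fin k → ℝ)
    (hd0 : ∀ i, 0 ≤ d i) (hd2 : ∀ i, d i ≤ 2) (hprod : 1 ≤ ∏ i, d i) :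
    1 ≤ (2 * (k : ℝ)) ^ k * ∏ i, min 1 (d i ^ 2 / 2) := by
  obtain rfl | hk2 := hk.eq_or_lt
  · rw [Fin.prod_univ_one] at hprod ⊢
    have : 1 / 2 ≤ min 1 (d 0 ^ 2 / 2) := le_min (by norm_num) (by nlinarith)
    norm_num
    linarith
  calc (1 : ℝ) ≤ (∏ i, d i) ^ 2 := one_le_pow₀ hprod
    _ = 4 ^ k * ∏ i, (d i ^ 2 / 4) := by
        rw [Finset.prod_div_distrib, Finset.prod_pow, Finset.prod_const, Finset.card_fin]
        field_simp
    _ ≤ (2 * k) ^ k * ∏ i, min 1 (d i ^ 2 / 2) := by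
        gcongr with i
        · have : (2 : ℝ) ≤ k := by exact_mod_cast hk2
          linarith
        · exact le_min (by nlinarith [hd0 i, hd2 i]) (by linarith [sq_nonneg (d i)])

lemma norm_mul_add_mul_le_one {a b x y : ℂ} (hab : ‖a‖ ^ 2 + ‖b‖ ^ 2 = 1)
    (hxy : ‖x‖ ^ 2 + ‖y‖ ^ 2 = 1) : ‖a * x + b * y‖ ≤ 1 := by
  refine (norm_add_le _ _).trans ?_
  rw [norm_mul, norm_mul]
  nlinarith [sq_nonneg (‖a‖ * ‖y‖ - ‖b‖ * ‖x‖), sq_nonneg (‖a‖ - ‖x‖), sq_nonneg (‖b‖ - ‖y‖)]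

lemma norm_div_two_sq_add_norm_div_two_sq (a b : ℂ) :
    ‖(a + b) / 2‖ ^ 2 + ‖(a - b) / 2‖ ^ 2 = (‖a‖ ^ 2 + ‖b‖ ^ 2) / 2 := by
  have := parallelogram_law_with_norm ℝ a b
  simp only [norm_div, Complex.norm_ofNat]
  nlinarith

lemma exists_sphere_one_le_prod_norm_mul_add_mul_mul_pow {k : ℕ} (hk : 1 ≤ k) (α β : Fin k → ℂ)
    (hαβ : ∀ i, ‖α i‖ ^ 2 + ‖β i‖ ^ 2 = 1) :
    ∃ x y : ℂ, ‖x‖ ^ 2 + ‖y‖ ^ 2 = 1 ∧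
      1 ≤ (∏ i, ‖α i * x + β i * y‖) * (2 * √k) ^ k := by
  choose w hw hmin using fun i ↦
    exists_norm_eq_one_forall_mul_min_le_sq_norm ((α i - β i) / 2) ((α i + β i) / 2)
  obtain ⟨ζ, hζ, hprod⟩ := exists_norm_eq_one_one_le_prod_norm_sub Finset.univ w
  refine ⟨(1 + ζ) / 2, (1 - ζ) / 2, ?_, ?_⟩
  · rw [norm_div_two_sq_add_norm_div_two_sq, norm_one, hζ]
    norm_num
  have hform : ∀ i, α i * ((1 + ζ) / 2) + β i * ((1 - ζ) / 2)
      = (α i - β i) / 2 * ζ + (α i + β i) / 2 := fun i ↦ by ring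
  have hcoeff : ∀ i, ‖(α i - β i) / 2‖ ^ 2 + ‖(α i + β i) / 2‖ ^ 2 = 1 / 2 := fun i ↦ by
    rw [add_comm, norm_div_two_sq_add_norm_div_two_sq, hαβ]
  have hdist : ∀ i, ‖ζ - w i‖ ≤ 2 := fun i ↦
    (norm_sub_le _ _).trans (by rw [hζ, hw]; norm_num)
  have hmin' := one_le_two_mul_pow_mul_prod_min hk (fun i ↦ ‖ζ - w i‖)
    (fun i ↦ norm_nonneg _) hdist hprod
  refine (one_le_sq_iff₀ (by positivity)).mp ?_
  calc (1 : ℝ) ≤ (2 * k) ^ k * ∏ i, min 1 (‖ζ - w i‖ ^ 2 / 2) := hmin'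
    _ = (4 * k) ^ k * ∏ i, 1 / 2 * min 1 (‖ζ - w i‖ ^ 2 / 2) := by
        rw [Finset.prod_mul_distrib, Finset.prod_const, Finset.card_fin, ← mul_assoc, ← mul_pow]
        ring_nf
    _ ≤ (4 * k) ^ k * ∏ i, ‖α i * ((1 + ζ) / 2) + β i * ((1 - ζ) / 2)‖ ^ 2 := by
        gcongr with i
        rw [hform, ← hcoeff]
        exact hmin i ζ hζ
    _ = ((∏ i, ‖α i * ((1 + ζ) / 2) + β i * ((1 - ζ) / 2)‖) * (2 * √k) ^ k) ^ 2 := by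
        have hsq : ((2 * √k) ^ k) ^ 2 = (4 * k : ℝ) ^ k := by
          rw [← pow_mul, mul_comm k 2, pow_mul, mul_pow, Real.sq_sqrt (Nat.cast_nonneg k)]
          norm_num
        rw [← hsq, Finset.prod_pow]
        ring

end

/-- For `g(x,y) = g₀ ∏ᵢ ((x,y), uᵢ)` with unit vectors `uᵢ` and `k ≥ 1`:
`‖g‖_max ≤ |g₀| ≤ ‖g‖_max · (2√k)^k`. -/
theorem stmt6 (k : ℕ) (hk : 1 ≤ k) (g₀ : ℂ) (u : Fin k → ℂ × ℂ)
    (hu : ∀ i, hnorm (u i) = 1)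
    (g : MvPolynomial (Fin 2) ℂ)
    (hg : g = C g₀ * ∏ i, (C ((starRingEnd ℂ) (u i).1) * X 0 +
      C ((starRingEnd ℂ) (u i).2) * X 1)) :
    sphereMax g ≤ ‖g₀‖ ∧ ‖g₀‖ ≤ sphereMax g * (2 * Real.sqrt k) ^ k := by
  have hunit : ∀ i, ‖starRingEnd ℂ (u i).1‖ ^ 2 + ‖starRingEnd ℂ (u i).2‖ ^ 2 = 1 := fun i ↦ by
    simpa [hnorm, Real.sqrt_eq_one] using hu i
  have heval : ∀ x y : ℂ, ‖eval ![x, y] g‖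
      = ‖g₀‖ * ∏ i, ‖starRingEnd ℂ (u i).1 * x + starRingEnd ℂ (u i).2 * y‖ := by
    simp [hg, norm_prod]
  have hle : ∀ x y : ℂ, ‖x‖ ^ 2 + ‖y‖ ^ 2 = 1 → ‖eval ![x, y] g‖ ≤ ‖g₀‖ := fun x y hxy ↦ by
    rw [heval]
    exact mul_le_of_le_one_right (norm_nonneg _) <| Finset.prod_le_one (fun _ _ ↦ norm_nonneg _)
      fun i _ ↦ norm_mul_add_mul_le_one (hunit i) hxy
  refine ⟨Real.sSup_le (by rintro _ ⟨x, y, hxy, rfl⟩; exact hle x y hxy) (norm_nonneg _), ?_⟩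
  obtain ⟨x, y, hxy, hgood⟩ := exists_sphere_one_le_prod_norm_mul_add_mul_mul_pow hk _ _ hunit
  calc ‖g₀‖ ≤ ‖g₀‖ * ((∏ i, ‖starRingEnd ℂ (u i).1 * x + starRingEnd ℂ (u i).2 * y‖)
        * (2 * √k) ^ k) := le_mul_of_one_le_right (norm_nonneg _) hgood
    _ = ‖eval ![x, y] g‖ * (2 * √k) ^ k := by rw [heval, mul_assoc]
    _ ≤ sphereMax g * (2 * √k) ^ k := by
        gcongr
        exact le_csSup ⟨‖g₀‖, by rintro _ ⟨x, y, hxy, rfl⟩; exact hle x y hxy⟩ ⟨x, y, hxy, rfl⟩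
end

section
/- For any homogeneous polynomials g and Q in two complex variables of degrees k and m respectively (k, m ≥ 1), one has ‖gQ‖_max ≥ (1/(2√(k+m)))^{k+m} · ‖g‖_max · ‖Q‖_max. -/
/-!
Dehomogenizing, a binary form `p` of degree `n` is the homogenization of a polynomial of degree
`≤ n`; since `ℂ` is algebraically closed, `p = c · ∏ᵢ (aᵢ x + bᵢ y)` with `|aᵢ|² + |bᵢ|² = 1`
(factors `y` pad the degree). By Cauchy–Schwarz every factor has modulus `≤ 1` on the sphere,
so `‖p‖_max ≤ |c|`. Conversely, the Fischer norm `∑ j! (n - j)! |p_j|²` does not decrease under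
multiplication by a unit linear form, so it is at least `|c|²`; averaging over roots of unity
bounds every coefficient by `√2 ^ n ‖p‖_max`, whence `|c| ≤ (2 √n) ^ n ‖p‖_max` as
`(n + 1)! 2 ^ n ≤ (4 n) ^ n`. The upper bound for `g` and `Q` and the lower bound for `gQ`,
whose constant is the product of theirs, give the theorem.
-/

open MvPolynomial

open Finset Complex ComplexConjugate
open scoped Nat Polynomial

lemma IsPrimitiveRoot.geom_sum_pow {K : Type*} [Field K] {ζ : K} {N : ℕ}
    (hζ : IsPrimitiveRoot ζ N) (t : ℕ) :
    ∑ s ∈ range N, (ζ ^ t) ^ s = if N ∣ t then (N : K) else 0 := by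
  split_ifs with h
  · simp [(hζ.pow_eq_one_iff_dvd t).2 h]
  · rw [geom_sum_eq ((hζ.pow_eq_one_iff_dvd t).not.2 h), ← pow_mul, mul_comm, pow_mul,
      hζ.pow_eq_one, one_pow, sub_self, zero_div]

lemma Nat.succ_factorial_mul_two_pow_le (n : ℕ) : (n + 1)! * 2 ^ n ≤ (4 * n) ^ n := by
  have h : (n + 1)! ≤ 2 ^ n * n ^ n := by
    rw [Nat.factorial_succ]
    exact Nat.mul_le_mul Nat.lt_two_pow_self (Nat.factorial_le_pow n)
  calc (n + 1)! * 2 ^ n ≤ 2 ^ n * n ^ n * 2 ^ n := Nat.mul_le_mul_right _ h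
    _ = (4 * n) ^ n := by rw [mul_pow, show 4 = 2 * 2 by rfl, mul_pow]; ring

lemma MvPolynomial.IsHomogeneous.natDegree_aeval_X_one_le {R : Type*} [CommSemiring R]
    {p : MvPolynomial (Fin 2) R} {n : ℕ} (hp : p.IsHomogeneous n) :
    (MvPolynomial.aeval ![(Polynomial.X : R[X]), 1] p).natDegree ≤ n := by
  rw [p.as_sum, map_sum]
  refine Polynomial.natDegree_sum_le_of_forall_le _ _ fun d hd => ?_
  have hdeg : d 0 + d 1 = n := by
    simpa [Finsupp.weight_apply, Finsupp.sum_fintype, Fin.sum_univ_two] using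
      hp (MvPolynomial.mem_support_iff.1 hd)
  simp only [aeval_monomial, Finsupp.prod_fintype _ _ (fun _ => pow_zero _), Fin.prod_univ_two,
    Matrix.cons_val_zero, Matrix.cons_val_one, one_pow, mul_one, Polynomial.algebraMap_eq]
  exact Polynomial.natDegree_C_mul_X_pow_le _ _ |>.trans (by omega)

lemma bddAbove_sphereValues (p : MvPolynomial (Fin 2) ℂ) :
    BddAbove {r : ℝ | ∃ x y : ℂ, ‖x‖ ^ 2 + ‖y‖ ^ 2 = 1 ∧ r = ‖eval ![x, y] p‖} := by
  have hS : IsCompact {v : ℂ × ℂ | ‖v.1‖ ^ 2 + ‖v.2‖ ^ 2 = 1} := by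
    refine Metric.isCompact_of_isClosed_isBounded (isClosed_eq (by fun_prop) continuous_const)
      ((Metric.isBounded_closedBall (x := 0) (r := 1)).subset fun v hv => ?_)
    have h1 : ‖v.1‖ ≤ 1 := by nlinarith [norm_nonneg v.1, sq_nonneg ‖v.2‖, hv.out]
    have h2 : ‖v.2‖ ≤ 1 := by nlinarith [norm_nonneg v.2, sq_nonneg ‖v.1‖, hv.out]
    simpa [Prod.norm_def] using And.intro h1 h2
  obtain ⟨B, hB⟩ := (hS.image (f := fun v => ‖eval ![v.1, v.2] p‖) (by
    refine continuous_norm.comp ((MvPolynomial.continuous_eval p).comp ?_)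
    exact continuous_pi fun i => by fin_cases i; exacts [continuous_fst, continuous_snd])).bddAbove
  exact ⟨B, by rintro r ⟨x, y, hxy, rfl⟩; exact hB ⟨(x, y), hxy, rfl⟩⟩

lemma norm_eval_le_sphereMax (p : MvPolynomial (Fin 2) ℂ) {x y : ℂ}
    (hxy : ‖x‖ ^ 2 + ‖y‖ ^ 2 = 1) : ‖eval ![x, y] p‖ ≤ sphereMax p :=
  le_csSup (bddAbove_sphereValues p) ⟨x, y, hxy, rfl⟩

lemma sphereMax_nonneg (p : MvPolynomial (Fin 2) ℂ) : 0 ≤ sphereMax p :=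
  (norm_nonneg _).trans (norm_eval_le_sphereMax p (x := 1) (y := 0) (by simp))

lemma sphereMax_le {p : MvPolynomial (Fin 2) ℂ} {B : ℝ}
    (hB : ∀ x y : ℂ, ‖x‖ ^ 2 + ‖y‖ ^ 2 = 1 → ‖eval ![x, y] p‖ ≤ B) : sphereMax p ≤ B :=
  csSup_le ⟨_, 1, 0, by simp, rfl⟩ fun _ ⟨x, y, hxy, hr⟩ => hr ▸ hB x y hxy

namespace Polynomial

lemma sum_pow_mul_eval_eq_coeff {K : Type*} [Field K] {ζ : K} {N : ℕ} (hζ : IsPrimitiveRoot ζ N)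
    {f : K[X]} (hf : f.natDegree < N) {j : ℕ} (hj : j < N) :
    ∑ s ∈ range N, (ζ ^ s) ^ (N - j) * f.eval (ζ ^ s) = N * f.coeff j := by
  simp_rw [eval_eq_sum_range' hf, mul_sum]
  rw [sum_comm]
  have hterm : ∀ i ∈ range N, ∑ s ∈ range N, (ζ ^ s) ^ (N - j) * (f.coeff i * (ζ ^ s) ^ i)
      = if i = j then N * f.coeff j else 0 := by
    intro i hi
    have hiN := mem_range.1 hi
    simp_rw [← pow_mul, mul_left_comm _ (f.coeff i), ← pow_add, ← mul_add, mul_comm _ (N - j + i),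
      pow_mul, ← mul_sum, hζ.geom_sum_pow]
    have hdvd : N ∣ N - j + i ↔ i = j := by
      refine ⟨fun ⟨c, hc⟩ => ?_, by rintro rfl; exact ⟨1, by omega⟩⟩
      rcases c with _ | _ | c
      · omega
      · omega
      · have : N * (c + 1 + 1) = N * c + 2 * N := by ring
        omega
    by_cases hij : i = j
    · subst hij; simp [Nat.sub_add_cancel hj.le, mul_comm]
    · simp [hij, hdvd]
  rw [sum_congr rfl hterm, sum_ite_eq' (range N) j, if_pos (mem_range.2 hj)]

lemma norm_coeff_le_of_forall_norm_eval_le {f : ℂ[X]} {M : ℝ}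
    (hM : ∀ z : ℂ, ‖z‖ = 1 → ‖f.eval z‖ ≤ M) (j : ℕ) : ‖f.coeff j‖ ≤ M := by
  set N := f.natDegree + j + 1
  have hN : N ≠ 0 := by omega
  have hζ := Complex.isPrimitiveRoot_exp N hN
  set ζ := Complex.exp (2 * Real.pi * Complex.I / N)
  have hζ1 : ‖ζ‖ = 1 := Complex.norm_eq_one_of_pow_eq_one hζ.pow_eq_one hN
  refine le_of_mul_le_mul_left ?_ (by positivity : (0 : ℝ) < N)
  calc (N : ℝ) * ‖f.coeff j‖ = ‖(N : ℂ) * f.coeff j‖ := by rw [norm_mul, Complex.norm_natCast]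
    _ = ‖∑ s ∈ range N, (ζ ^ s) ^ (N - j) * f.eval (ζ ^ s)‖ := by
        rw [sum_pow_mul_eval_eq_coeff hζ (by omega) (by omega)]
    _ ≤ ∑ s ∈ range N, ‖(ζ ^ s) ^ (N - j) * f.eval (ζ ^ s)‖ := norm_sum_le _ _
    _ ≤ ∑ _s ∈ range N, M := sum_le_sum fun s _ => by
        rw [norm_mul, norm_pow, norm_pow, hζ1, one_pow, one_pow, one_mul]
        exact hM _ (by rw [norm_pow, hζ1, one_pow])
    _ = N * M := by simp

noncomputable def linearForm (v : ℂ × ℂ) : ℂ[X] := C v.1 * X + C v.2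

lemma natDegree_linearForm_le (v : ℂ × ℂ) : (linearForm v).natDegree ≤ 1 := natDegree_linear_le

noncomputable def linearProduct (c : ℂ) (L : Multiset (ℂ × ℂ)) : ℂ[X] :=
  C c * (L.map linearForm).prod

lemma linearProduct_cons (c : ℂ) (v : ℂ × ℂ) (L : Multiset (ℂ × ℂ)) :
    linearProduct c (v ::ₘ L) = linearForm v * linearProduct c L := by
  simp only [linearProduct, Multiset.map_cons, Multiset.prod_cons]
  ring

lemma linearProduct_add (c d : ℂ) (L L' : Multiset (ℂ × ℂ)) :
    linearProduct (c * d) (L + L') = linearProduct c L * linearProduct d L' := by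
  simp only [linearProduct, Multiset.map_add, Multiset.prod_add, C_mul]
  ring

lemma natDegree_linearProduct_le (c : ℂ) (L : Multiset (ℂ × ℂ)) :
    (linearProduct c L).natDegree ≤ L.card := by
  induction L using Multiset.induction_on with
  | empty => simp [linearProduct]
  | cons v L ih =>
    rw [linearProduct_cons, Multiset.card_cons, add_comm]
    exact natDegree_mul_le.trans (add_le_add (natDegree_linearForm_le v) ih)

lemma eval_homogenize_linearForm (v : ℂ × ℂ) (x y : ℂ) :
    MvPolynomial.eval ![x, y] ((linearForm v).homogenize 1) = v.1 * x + v.2 * y := by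
  simp [linearForm]

lemma eval_homogenize_linearProduct (c : ℂ) (L : Multiset (ℂ × ℂ)) (x y : ℂ) :
    MvPolynomial.eval ![x, y] ((linearProduct c L).homogenize L.card) =
      c * (L.map fun v => v.1 * x + v.2 * y).prod := by
  induction L using Multiset.induction_on with
  | empty => simp [linearProduct]
  | cons v L ih =>
    rw [linearProduct_cons, Multiset.card_cons, add_comm,
      homogenize_mul _ _ (natDegree_linearForm_le v) (natDegree_linearProduct_le c L), map_mul, ih,
      eval_homogenize_linearForm, Multiset.map_cons, Multiset.prod_cons]
    ring

lemma linearForm_eq_C_mul_unit {v : ℂ × ℂ} (hv : v ≠ 0) :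
    ∃ (c : ℂ) (w : ℂ × ℂ), ‖w.1‖ ^ 2 + ‖w.2‖ ^ 2 = 1 ∧ linearForm v = C c * linearForm w := by
  set s := √(‖v.1‖ ^ 2 + ‖v.2‖ ^ 2)
  have hs : 0 < s := by
    refine Real.sqrt_pos.2 ?_
    rcases v with ⟨a, b⟩
    by_cases ha : a = 0
    · have hb : b ≠ 0 := by rintro rfl; exact hv (by simp [ha])
      have := norm_pos_iff.2 hb
      positivity
    · have := norm_pos_iff.2 ha
      positivity
  refine ⟨s, (v.1 / s, v.2 / s), ?_, ?_⟩
  · have hsq : s ^ 2 = ‖v.1‖ ^ 2 + ‖v.2‖ ^ 2 := Real.sq_sqrt (by positivity)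
    simp only [norm_div, Complex.norm_real, Real.norm_of_nonneg hs.le, div_pow]
    rw [← add_div, ← hsq, div_self (by positivity)]
  · have hs' : (s : ℂ) ≠ 0 := Complex.ofReal_ne_zero.2 hs.ne'
    simp only [linearForm, mul_add, ← mul_assoc, ← C_mul, mul_div_cancel₀ _ hs']

lemma exists_unit_linearProduct_eq (c : ℂ) (L : Multiset (ℂ × ℂ)) (hL : ∀ v ∈ L, v ≠ 0) :
    ∃ (c' : ℂ) (L' : Multiset (ℂ × ℂ)), L'.card = L.card ∧
      (∀ w ∈ L', ‖w.1‖ ^ 2 + ‖w.2‖ ^ 2 = 1) ∧ linearProduct c L = linearProduct c' L' := by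
  induction L using Multiset.induction_on with
  | empty => exact ⟨c, 0, rfl, by simp, rfl⟩
  | cons v L ih =>
    obtain ⟨c', L', hcard, hunit, hprod⟩ := ih fun w hw => hL w (Multiset.mem_cons_of_mem hw)
    obtain ⟨d, w, hw, hv⟩ := linearForm_eq_C_mul_unit (hL v (Multiset.mem_cons_self v L))
    refine ⟨d * c', w ::ₘ L', by simp [hcard], ?_, ?_⟩
    · simpa [hw] using hunit
    · rw [linearProduct_cons, linearProduct_cons, hprod, hv]
      simp only [linearProduct, C_mul]
      ring

lemma exists_eq_linearProduct {f : ℂ[X]} {n : ℕ} (hf : f.natDegree ≤ n) :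
    ∃ (c : ℂ) (L : Multiset (ℂ × ℂ)), L.card = n ∧
      (∀ w ∈ L, ‖w.1‖ ^ 2 + ‖w.2‖ ^ 2 = 1) ∧ f = linearProduct c L := by
  have hroots : f = linearProduct f.leadingCoeff (f.roots.map fun r => (1, -r)) := by
    conv_lhs => rw [← C_leadingCoeff_mul_prod_multiset_X_sub_C (p := f)
      IsAlgClosed.card_roots_eq_natDegree]
    simp [linearProduct, Multiset.map_map, Function.comp_def, linearForm, sub_eq_add_neg]
  obtain ⟨c, L, hcard, hunit, hprod⟩ := exists_unit_linearProduct_eq f.leadingCoeff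
    (f.roots.map fun r => (1, -r)) fun v hv => by
      obtain ⟨r, -, rfl⟩ := Multiset.mem_map.1 hv; simp
  -- pad with factors `y`, whose dehomogenization `linearForm (0, 1)` is `1`
  refine ⟨c, L + Multiset.replicate (n - f.natDegree) (0, 1), ?_, ?_, ?_⟩
  · simp [hcard, IsAlgClosed.card_roots_eq_natDegree, hf]
  · intro w hw
    rcases Multiset.mem_add.1 hw with hw | hw
    · exact hunit w hw
    · simp [Multiset.eq_of_mem_replicate hw]
  · rw [hroots, hprod]
    simp [linearProduct, linearForm]

lemma norm_linear_le_one {v : ℂ × ℂ} (hv : ‖v.1‖ ^ 2 + ‖v.2‖ ^ 2 = 1) {x y : ℂ}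
    (hxy : ‖x‖ ^ 2 + ‖y‖ ^ 2 = 1) : ‖v.1 * x + v.2 * y‖ ≤ 1 := by
  have h := (norm_add_le (v.1 * x) (v.2 * y)).trans_eq (by rw [norm_mul, norm_mul])
  nlinarith [sq_nonneg (‖v.1‖ * ‖y‖ - ‖v.2‖ * ‖x‖), norm_nonneg v.1, norm_nonneg v.2,
    norm_nonneg x, norm_nonneg y, norm_nonneg (v.1 * x + v.2 * y)]

lemma sphereMax_homogenize_linearProduct_le (c : ℂ) {L : Multiset (ℂ × ℂ)}
    (hL : ∀ v ∈ L, ‖v.1‖ ^ 2 + ‖v.2‖ ^ 2 = 1) :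
    sphereMax ((linearProduct c L).homogenize L.card) ≤ ‖c‖ := by
  refine sphereMax_le fun x y hxy => ?_
  rw [eval_homogenize_linearProduct, norm_mul]
  refine mul_le_of_le_one_right (norm_nonneg c) ?_
  induction L using Multiset.induction_on with
  | empty => simp
  | cons v L ih =>
    rw [Multiset.map_cons, Multiset.prod_cons, norm_mul]
    exact mul_le_one₀ (norm_linear_le_one (hL v (Multiset.mem_cons_self v L)) hxy)
      (norm_nonneg _) (ih fun w hw => hL w (Multiset.mem_cons_of_mem hw))

lemma coeff_linearForm_mul_zero (v : ℂ × ℂ) (f : ℂ[X]) :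
    (linearForm v * f).coeff 0 = v.2 * f.coeff 0 := by
  simp [linearForm, add_mul, mul_assoc]

lemma coeff_linearForm_mul_succ (v : ℂ × ℂ) (f : ℂ[X]) (i : ℕ) :
    (linearForm v * f).coeff (i + 1) = v.1 * f.coeff i + v.2 * f.coeff (i + 1) := by
  simp [linearForm, add_mul, mul_assoc]

/-- `n!` times the squared Bombieri norm of the degree-`n` homogenization of `f`. -/
noncomputable def fischerNorm (n : ℕ) (f : ℂ[X]) : ℝ :=
  ∑ j ∈ range (n + 1), (j ! * (n - j)! : ℝ) * normSq (f.coeff j)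

lemma sum_succ_factorial_mul_factorial_mul (n : ℕ) (F : ℕ → ℝ) :
    ∑ i ∈ range (n + 1), ((i + 1)! * (n - i)! : ℝ) * F i =
      ∑ i ∈ range (n + 1), (i ! * (n - i)! : ℝ) * F i +
        ∑ i ∈ range n, (i ! * (n - 1 - i)! * (i + 1) ^ 2 : ℝ) * F (i + 1) := by
  have hshift : ∑ i ∈ range n, (i ! * (n - 1 - i)! * (i + 1) ^ 2 : ℝ) * F (i + 1) =
      ∑ i ∈ range (n + 1), (i * (i ! * (n - i)!) : ℝ) * F i := by
    rw [sum_range_succ', Nat.cast_zero, zero_mul, zero_mul, add_zero]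
    refine sum_congr rfl fun i _ => ?_
    rw [Nat.factorial_succ, Nat.sub_sub, add_comm 1 i]
    push_cast
    ring
  rw [hshift, ← sum_add_distrib]
  refine sum_congr rfl fun i _ => ?_
  rw [Nat.factorial_succ]
  push_cast
  ring

lemma sum_factorial_mul_succ_factorial_mul (n : ℕ) (F : ℕ → ℝ) :
    ∑ i ∈ range (n + 1), (i ! * (n + 1 - i)! : ℝ) * F i =
      ∑ i ∈ range (n + 1), (i ! * (n - i)! : ℝ) * F i +
        ∑ i ∈ range n, (i ! * (n - 1 - i)! * (n - i) ^ 2 : ℝ) * F i := by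
  have hext : ∑ i ∈ range n, (i ! * (n - 1 - i)! * (n - i) ^ 2 : ℝ) * F i =
      ∑ i ∈ range (n + 1), ((n - i) * (i ! * (n - i)!) : ℝ) * F i := by
    rw [sum_range_succ, sub_self, zero_mul, zero_mul, add_zero]
    refine sum_congr rfl fun i hi => ?_
    obtain ⟨k, rfl⟩ := Nat.exists_eq_add_of_lt (mem_range.1 hi)
    rw [show i + k + 1 - 1 - i = k by omega, show i + k + 1 - i = k + 1 by omega,
      Nat.factorial_succ]
    push_cast
    ring
  rw [hext, ← sum_add_distrib]
  refine sum_congr rfl fun i hi => ?_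
  obtain ⟨k, rfl⟩ := Nat.exists_eq_add_of_le (Nat.lt_succ_iff.1 (mem_range.1 hi))
  rw [show i + k + 1 - i = k + 1 by omega, Nat.add_sub_cancel_left, Nat.factorial_succ]
  push_cast
  ring

lemma fischerNorm_linearForm_mul_eq_sum {f : ℂ[X]} {n : ℕ} (hf : f.natDegree ≤ n) (a b : ℂ) :
    fischerNorm (n + 1) (linearForm (a, b) * f) =
      normSq a * ∑ i ∈ range (n + 1), ((i + 1)! * (n - i)! : ℝ) * normSq (f.coeff i) +
      normSq b * ∑ i ∈ range (n + 1), (i ! * (n + 1 - i)! : ℝ) * normSq (f.coeff i) +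
      2 * ∑ i ∈ range n, ((i + 1)! * (n - i)! : ℝ) *
        (a * f.coeff i * conj (b * f.coeff (i + 1))).re := by
  have hn : f.coeff (n + 1) = 0 := coeff_eq_zero_of_natDegree_lt (by omega)
  have hterm : ∀ i ∈ range (n + 1), ((i + 1)! * (n + 1 - (i + 1))! : ℝ) *
      normSq ((linearForm (a, b) * f).coeff (i + 1)) =
      normSq a * (((i + 1)! * (n - i)! : ℝ) * normSq (f.coeff i)) +
      normSq b * (((i + 1)! * (n + 1 - (i + 1))! : ℝ) * normSq (f.coeff (i + 1))) +
      2 * (((i + 1)! * (n - i)! : ℝ) * (a * f.coeff i * conj (b * f.coeff (i + 1))).re) :=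
    fun i _ => by
      rw [coeff_linearForm_mul_succ, normSq_add, normSq_mul, normSq_mul, Nat.add_sub_add_right]
      ring
  have hb : ∑ i ∈ range (n + 1), (i ! * (n + 1 - i)! : ℝ) * normSq (f.coeff i) =
      ∑ i ∈ range (n + 1), ((i + 1)! * (n + 1 - (i + 1))! : ℝ) * normSq (f.coeff (i + 1)) +
        (0 ! * (n + 1 - 0)! : ℝ) * normSq (f.coeff 0) := by
    rw [← sum_range_succ' (fun i => (i ! * (n + 1 - i)! : ℝ) * normSq (f.coeff i)),
      sum_range_succ _ (n + 1), hn, normSq_zero, mul_zero, add_zero]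
  have hY : ∑ i ∈ range n, ((i + 1)! * (n - i)! : ℝ) *
      (a * f.coeff i * conj (b * f.coeff (i + 1))).re =
      ∑ i ∈ range (n + 1), ((i + 1)! * (n - i)! : ℝ) *
        (a * f.coeff i * conj (b * f.coeff (i + 1))).re := by
    rw [sum_range_succ, hn]
    simp
  rw [fischerNorm, sum_range_succ', sum_congr rfl hterm, coeff_linearForm_mul_zero, normSq_mul,
    hb, hY]
  simp only [sum_add_distrib, ← mul_sum]
  ring

lemma sum_normSq_adjoint_eq_sum (f : ℂ[X]) (n : ℕ) (a b : ℂ) :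
    ∑ i ∈ range n, (i ! * (n - 1 - i)! : ℝ) *
        normSq (conj a * (i + 1) * f.coeff (i + 1) + conj b * (n - i) * f.coeff i) =
      normSq a * ∑ i ∈ range n, (i ! * (n - 1 - i)! * (i + 1) ^ 2 : ℝ) * normSq (f.coeff (i + 1)) +
      normSq b * ∑ i ∈ range n, (i ! * (n - 1 - i)! * (n - i) ^ 2 : ℝ) * normSq (f.coeff i) +
      2 * ∑ i ∈ range n, ((i + 1)! * (n - i)! : ℝ) *
        (a * f.coeff i * conj (b * f.coeff (i + 1))).re := by
  simp only [mul_sum, ← sum_add_distrib]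
  refine sum_congr rfl fun i hi => ?_
  obtain ⟨k, rfl⟩ := Nat.exists_eq_add_of_lt (mem_range.1 hi)
  rw [show i + k + 1 - 1 - i = k by omega, show i + k + 1 - i = k + 1 by omega,
    Nat.factorial_succ, Nat.factorial_succ]
  simp only [normSq_apply, mul_re, mul_im, add_re, add_im, conj_re, conj_im, natCast_re,
    natCast_im, one_re, one_im, sub_re, sub_im]
  push_cast
  ring

/-- The remainder is the Fischer norm of `(conj v.1 ∂ₓ + conj v.2 ∂_y) f`, the adjoint of
multiplication by `v.1 x + v.2 y`; the identity expresses `[∂ₓ, x] = [∂_y, y] = 1`. -/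
lemma fischerNorm_linearForm_mul {f : ℂ[X]} {n : ℕ} (hf : f.natDegree ≤ n) (v : ℂ × ℂ) :
    fischerNorm (n + 1) (linearForm v * f) =
      (normSq v.1 + normSq v.2) * fischerNorm n f +
        ∑ i ∈ range n, (i ! * (n - 1 - i)! : ℝ) *
          normSq (conj v.1 * (i + 1) * f.coeff (i + 1) + conj v.2 * (n - i) * f.coeff i) := by
  obtain ⟨a, b⟩ := v
  rw [fischerNorm_linearForm_mul_eq_sum hf, sum_normSq_adjoint_eq_sum,
    sum_succ_factorial_mul_factorial_mul, sum_factorial_mul_succ_factorial_mul, fischerNorm]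
  ring

lemma fischerNorm_le_linearForm_mul {f : ℂ[X]} {n : ℕ} (hf : f.natDegree ≤ n) {v : ℂ × ℂ}
    (hv : ‖v.1‖ ^ 2 + ‖v.2‖ ^ 2 = 1) :
    fischerNorm n f ≤ fischerNorm (n + 1) (linearForm v * f) := by
  rw [fischerNorm_linearForm_mul hf, normSq_eq_norm_sq, normSq_eq_norm_sq, hv, one_mul]
  exact le_add_of_nonneg_right (sum_nonneg fun i _ => mul_nonneg (by positivity) (normSq_nonneg _))

lemma normSq_le_fischerNorm_linearProduct (c : ℂ) {L : Multiset (ℂ × ℂ)}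
    (hL : ∀ v ∈ L, ‖v.1‖ ^ 2 + ‖v.2‖ ^ 2 = 1) :
    normSq c ≤ fischerNorm L.card (linearProduct c L) := by
  induction L using Multiset.induction_on with
  | empty => simp [fischerNorm, linearProduct]
  | cons v L ih =>
    rw [linearProduct_cons, Multiset.card_cons]
    exact (ih fun w hw => hL w (Multiset.mem_cons_of_mem hw)).trans
      (fischerNorm_le_linearForm_mul (natDegree_linearProduct_le c L)
        (hL v (Multiset.mem_cons_self v L)))

lemma fischerNorm_le_of_norm_coeff_le (f : ℂ[X]) (n : ℕ) {B : ℝ} (hB : ∀ j, ‖f.coeff j‖ ≤ B) :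
    fischerNorm n f ≤ (n + 1)! * B ^ 2 := by
  calc fischerNorm n f ≤ ∑ _j ∈ range (n + 1), (n ! : ℝ) * B ^ 2 := by
        refine sum_le_sum fun j hj => ?_
        have hw : (j ! * (n - j)! : ℝ) ≤ n ! := by
          exact_mod_cast Nat.le_of_dvd n.factorial_pos
            (Nat.factorial_mul_factorial_dvd_factorial (Nat.lt_succ_iff.1 (mem_range.1 hj)))
        rw [normSq_eq_norm_sq]
        exact mul_le_mul hw (pow_le_pow_left₀ (norm_nonneg _) (hB j) 2) (by positivity)
          (by positivity)
    _ = (n + 1)! * B ^ 2 := by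
        rw [sum_const, card_range, nsmul_eq_mul, Nat.factorial_succ]
        push_cast
        ring

lemma norm_coeff_le_sphereMax_homogenize {f : ℂ[X]} {n : ℕ} (hf : f.natDegree ≤ n) (j : ℕ) :
    ‖f.coeff j‖ ≤ √2 ^ n * sphereMax (f.homogenize n) := by
  refine norm_coeff_le_of_forall_norm_eval_le (fun z hz => ?_) j
  set u : ℂ := (((√2)⁻¹ : ℝ) : ℂ)
  have hu : ‖u‖ = (√2)⁻¹ := by simp [u]
  have hpt : ‖z * u‖ ^ 2 + ‖u‖ ^ 2 = 1 := by
    rw [norm_mul, hz, one_mul, hu, inv_pow, Real.sq_sqrt zero_le_two]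
    norm_num
  have hle := norm_eval_le_sphereMax (f.homogenize n) hpt
  rw [eval_homogenize hf ![z * u, u] (by simp [u])] at hle
  simp only [Matrix.cons_val_zero, Matrix.cons_val_one,
    mul_div_cancel_right₀ z (show u ≠ 0 by simp [u]), norm_mul, norm_pow, hu] at hle
  calc ‖f.eval z‖ = ‖f.eval z‖ * (√2)⁻¹ ^ n * √2 ^ n := by
        rw [mul_assoc, ← mul_pow, inv_mul_cancel₀ (by positivity), one_pow, mul_one]
    _ ≤ sphereMax (f.homogenize n) * √2 ^ n := by gcongr
    _ = √2 ^ n * sphereMax (f.homogenize n) := mul_comm _ _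

lemma one_div_pow_mul_norm_le_sphereMax (c : ℂ) {L : Multiset (ℂ × ℂ)}
    (hL : ∀ v ∈ L, ‖v.1‖ ^ 2 + ‖v.2‖ ^ 2 = 1) :
    (1 / (2 * √L.card)) ^ L.card * ‖c‖ ≤ sphereMax ((linearProduct c L).homogenize L.card) := by
  set n := L.card
  set M := sphereMax ((linearProduct c L).homogenize n)
  have hM : 0 ≤ M := sphereMax_nonneg _
  have hsq : ‖c‖ ^ 2 ≤ ((2 * √n) ^ n * M) ^ 2 := calc
    ‖c‖ ^ 2 = normSq c := (normSq_eq_norm_sq c).symm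
    _ ≤ fischerNorm n (linearProduct c L) := normSq_le_fischerNorm_linearProduct c hL
    _ ≤ (n + 1)! * (√2 ^ n * M) ^ 2 := fischerNorm_le_of_norm_coeff_le _ _
        (norm_coeff_le_sphereMax_homogenize (natDegree_linearProduct_le c L))
    _ = ((n + 1)! * 2 ^ n : ℕ) * M ^ 2 := by
        rw [mul_pow, ← pow_mul, mul_comm n 2, pow_mul, Real.sq_sqrt zero_le_two]
        push_cast
        ring
    _ ≤ ((4 * n) ^ n : ℕ) * M ^ 2 := by
        gcongr
        exact Nat.succ_factorial_mul_two_pow_le n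
    _ = ((2 * √n) ^ 2) ^ n * M ^ 2 := by
        rw [mul_pow 2, Real.sq_sqrt n.cast_nonneg]
        push_cast
        ring
    _ = ((2 * √n) ^ n * M) ^ 2 := by rw [mul_pow _ M, ← pow_mul, ← pow_mul, mul_comm 2 n]
  have hc : ‖c‖ ≤ (2 * √n) ^ n * M :=
    (pow_le_pow_iff_left₀ (norm_nonneg c) (by positivity) two_ne_zero).1 hsq
  calc (1 / (2 * √n)) ^ n * ‖c‖ ≤ (1 / (2 * √n)) ^ n * ((2 * √n) ^ n * M) := by gcongr
    _ = ((2 * √n)⁻¹ * (2 * √n)) ^ n * M := by rw [← mul_assoc, ← mul_pow, one_div]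
    _ ≤ M := mul_le_of_le_one_left hM (pow_le_one₀ (by positivity) inv_mul_le_one)

end Polynomial

lemma MvPolynomial.IsHomogeneous.exists_eq_homogenize_linearProduct
    {p : MvPolynomial (Fin 2) ℂ} {n : ℕ} (hp : p.IsHomogeneous n) :
    ∃ (c : ℂ) (L : Multiset (ℂ × ℂ)), L.card = n ∧ (∀ w ∈ L, ‖w.1‖ ^ 2 + ‖w.2‖ ^ 2 = 1) ∧
      p = (Polynomial.linearProduct c L).homogenize n := by
  obtain ⟨c, L, hcard, hunit, hf⟩ := Polynomial.exists_eq_linearProduct hp.natDegree_aeval_X_one_le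
  exact ⟨c, L, hcard, hunit, hf ▸ (Polynomial.homogenize_eq_of_isHomogeneous hp rfl).symm⟩

theorem stmt7_general (k m : ℕ)
    (g Q : MvPolynomial (Fin 2) ℂ)
    (hg : g.IsHomogeneous k) (hQ : Q.IsHomogeneous m) :
    sphereMax (g * Q) ≥
      (1 / (2 * Real.sqrt (k + m))) ^ (k + m) * sphereMax g * sphereMax Q := by
  obtain ⟨c₁, L₁, rfl, hL₁, rfl⟩ := hg.exists_eq_homogenize_linearProduct
  obtain ⟨c₂, L₂, rfl, hL₂, rfl⟩ := hQ.exists_eq_homogenize_linearProduct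
  have hprod := Polynomial.homogenize_mul _ _ (Polynomial.natDegree_linearProduct_le c₁ L₁)
    (Polynomial.natDegree_linearProduct_le c₂ L₂)
  rw [← Polynomial.linearProduct_add, ← Multiset.card_add] at hprod
  have hlow := Polynomial.one_div_pow_mul_norm_le_sphereMax (c₁ * c₂) (L := L₁ + L₂)
    fun v hv => (Multiset.mem_add.1 hv).elim (hL₁ v) (hL₂ v)
  rw [hprod, Multiset.card_add, Nat.cast_add, norm_mul, ← mul_assoc] at hlow
  refine le_trans ?_ hlow
  gcongr
  · exact sphereMax_nonneg _
  · exact Polynomial.sphereMax_homogenize_linearProduct_le c₁ hL₁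
  · exact Polynomial.sphereMax_homogenize_linearProduct_le c₂ hL₂

/-- For homogeneous `g, Q` of degrees `k, m ≥ 1`:
`‖gQ‖_max ≥ (1/(2√(k+m)))^(k+m) ‖g‖_max ‖Q‖_max`. -/
theorem stmt7 (k m : ℕ) (hk : 1 ≤ k) (hm : 1 ≤ m)
    (g Q : MvPolynomial (Fin 2) ℂ)
    (hg : g.IsHomogeneous k) (hQ : Q.IsHomogeneous m) :
    sphereMax (g * Q) ≥
      (1 / (2 * Real.sqrt (k + m))) ^ (k + m) * sphereMax g * sphereMax Q :=
  stmt7_general k m g Q hg hQ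
end

section
/- Let n ≥ 2 and define C_n = (−1)^{n(3n−1)/4} · (2π)^{n(n+1)/2} (n+1)^{(n²+n−4)/2} ((n+1)!)^n / ∏_{m=1}^{n−1} (m+n+1)!. Then |C_n| > e^{−12n²}. -/
/-- The constant `C_n` from Glutsyuk's formula for the period determinant. -/
noncomputable def Cconst (n : ℕ) : ℝ :=
  (-1) ^ (n * (3 * n - 1) / 4) * (2 * Real.pi) ^ (n * (n + 1) / 2) *
    ((n : ℝ) + 1) ^ ((n ^ 2 + n - 4) / 2) * ((Nat.factorial (n + 1) : ℝ)) ^ n /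
    ∏ m ∈ Finset.Icc 1 (n - 1), (Nat.factorial (m + n + 1) : ℝ)

/-!
Each factor of the denominator satisfies `(m + n + 1)! ≤ (n + 1)! (2n)^m`, so the denominator is
at most `((n + 1)!)^(n - 1) (2n)^(n(n - 1)/2) ≤ ((n + 1)!)^n (n + 1)^((n² + n - 4)/2) 2^(n²)`.
Hence `|C_n| ≥ (2π)^(n(n + 1)/2) 2^(-n²) ≥ 2^(-n²) > e^(-n²)`.
-/

open Finset Nat

theorem Nat.factorial_add_le_factorial_mul_pow (a k : ℕ) : (a + k)! ≤ a ! * (a + k) ^ k := by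
  rw [← factorial_mul_ascFactorial]
  exact Nat.mul_le_mul_left _ (ascFactorial_le_pow_add a k)

theorem Finset.sum_Icc_one_sub_one_id_mul_two (n : ℕ) :
    (∑ m ∈ Icc 1 (n - 1), m) * 2 = n * (n - 1) := by
  rw [← sum_range_id_mul_two, range_eq_Ico]
  cases n with
  | zero => rfl
  | succ k => rw [sum_eq_sum_Ico_succ_bot k.succ_pos, Nat.succ_eq_add_one,
      Ico_add_one_right_eq_Icc, zero_add, zero_add, Nat.add_sub_cancel]

theorem prod_factorial_add_le_pow_sum (n : ℕ) :
    ∏ m ∈ Icc 1 (n - 1), (m + n + 1)! ≤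
      (n + 1)! ^ (n - 1) * (2 * n) ^ (∑ m ∈ Icc 1 (n - 1), m) := by
  calc ∏ m ∈ Icc 1 (n - 1), (m + n + 1)!
      ≤ ∏ m ∈ Icc 1 (n - 1), (n + 1)! * (2 * n) ^ m := by
        refine prod_le_prod' fun m hm => ?_
        have hm := mem_Icc.mp hm
        calc (m + n + 1)! = (n + 1 + m)! := by ring_nf
          _ ≤ (n + 1)! * (n + 1 + m) ^ m := factorial_add_le_factorial_mul_pow _ _
          _ ≤ (n + 1)! * (2 * n) ^ m := by gcongr; omega
    _ = (n + 1)! ^ (n - 1) * (2 * n) ^ (∑ m ∈ Icc 1 (n - 1), m) := by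
        rw [prod_mul_distrib, prod_const, prod_pow_eq_pow_sum, Nat.card_Icc, Nat.add_sub_cancel]

theorem prod_factorial_add_le (n : ℕ) (hn : 2 ≤ n) :
    ∏ m ∈ Icc 1 (n - 1), (m + n + 1)! ≤
      (n + 1)! ^ n * (n + 1) ^ ((n ^ 2 + n - 4) / 2) * 2 ^ (n ^ 2) := by
  set S := ∑ m ∈ Icc 1 (n - 1), m
  have hS : S * 2 = n * (n - 1) := sum_Icc_one_sub_one_id_mul_two n
  have hsq : n * (n - 1) = n ^ 2 - n := by rw [Nat.mul_sub, mul_one, sq]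
  have hn_le_sq : n ≤ n ^ 2 := Nat.le_self_pow two_ne_zero n
  calc ∏ m ∈ Icc 1 (n - 1), (m + n + 1)!
      ≤ (n + 1)! ^ (n - 1) * (2 ^ S * n ^ S) := by
        rw [← mul_pow]; exact prod_factorial_add_le_pow_sum n
    _ ≤ (n + 1)! ^ n * (2 ^ (n ^ 2) * (n + 1) ^ ((n ^ 2 + n - 4) / 2)) := by
        gcongr
        · exact factorial_pos _
        all_goals omega
    _ = (n + 1)! ^ n * (n + 1) ^ ((n ^ 2 + n - 4) / 2) * 2 ^ (n ^ 2) := by ring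

theorem abs_Cconst (n : ℕ) :
    |Cconst n| = (2 * Real.pi) ^ (n * (n + 1) / 2) *
      (((n + 1)! : ℝ) ^ n * ((n : ℝ) + 1) ^ ((n ^ 2 + n - 4) / 2)) /
        ∏ m ∈ Icc 1 (n - 1), ((m + n + 1)! : ℝ) := by
  have := Real.pi_pos
  rw [Cconst, abs_div, abs_mul, abs_mul, abs_mul, abs_pow, abs_neg, abs_one, one_pow, one_mul,
    abs_of_nonneg (by positivity), abs_of_nonneg (by positivity), abs_of_nonneg (by positivity),
    abs_of_pos (by positivity)]
  ring

theorem Real.exp_neg_mul_lt_inv_two_pow {c : ℝ} (hc : 1 ≤ c) {k : ℕ} (hk : k ≠ 0) :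
    Real.exp (-(c * k)) < (2 ^ k)⁻¹ := by
  rw [Real.exp_neg, inv_lt_inv₀ (by positivity) (by positivity)]
  calc (2 : ℝ) ^ k < Real.exp 1 ^ k := by
        gcongr
        linarith [Real.add_one_lt_exp one_ne_zero]
    _ = Real.exp k := by rw [← Real.exp_nat_mul, mul_one]
    _ ≤ Real.exp (c * k) := by gcongr; nlinarith [(Nat.cast_nonneg k : (0 : ℝ) ≤ k)]

/-- For `n ≥ 2`: `|C_n| > e^(−12n²)`. -/
theorem stmt15 (n : ℕ) (hn : 2 ≤ n) :
    |Cconst n| > Real.exp (-(12 * (n : ℝ) ^ 2)) := by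
  set P : ℝ := ∏ m ∈ Icc 1 (n - 1), ((m + n + 1)! : ℝ)
  set F : ℝ := ((n + 1)! : ℝ) ^ n * ((n : ℝ) + 1) ^ ((n ^ 2 + n - 4) / 2)
  have hP : P ≤ F * 2 ^ (n ^ 2) := by
    simp only [P, F]
    exact_mod_cast prod_factorial_add_le n hn
  have hpi : 1 ≤ (2 * Real.pi) ^ (n * (n + 1) / 2) :=
    one_le_pow₀ (by linarith [Real.pi_gt_three])
  have hexp := Real.exp_neg_mul_lt_inv_two_pow (c := 12) (by norm_num) (k := n ^ 2) (by positivity)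
  push_cast at hexp
  rw [abs_Cconst, gt_iff_lt]
  calc Real.exp (-(12 * (n : ℝ) ^ 2)) < (2 ^ (n ^ 2))⁻¹ := hexp
    _ ≤ F / P := by
        rw [le_div_iff₀ (by positivity), inv_mul_le_iff₀ (by positivity)]
        linarith
    _ ≤ (2 * Real.pi) ^ (n * (n + 1) / 2) * F / P := by
        gcongr
        exact le_mul_of_one_le_left (by positivity) hpi
end
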